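/- Let M ⊆ X be a submodule such that every subquotient of X is stable for descending filtrations. Suppose given: a descending ℤ-composition series X = X₀ ⊇ X₁ ⊇ ⋯ of X with factors among (S_j); a descending ℤ-composition series M = M₀ ⊇ M₁ ⊇ ⋯ of M with factors among (S_j); and that the induced chain X/M ⊇ (X₁ ⊔ M)/M ⊇ (X₂ ⊔ M)/M ⊇ ⋯ is a descending ℤ-composition series of X/M with factors among (S_j). Then for every j ∈ J, the multiplicity of S_j in the series of X equals the multiplicity of S_j in the series of M plus the multiplicity of S_j in the induced series of X/M. -/

import Mathlib

/-!
Each step `X_{i+1} ⩿ X_i` induces a step `X_{i+1} ⊓ M ⩿ X_i ⊓ M` of `M` and a step of `X/M`. By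
modularity `(X_i ⊓ M) ⊔ X_{i+1}` is `X_i` or `X_{i+1}`: in the first case the factor
`X_i/X_{i+1}` reappears in `M` (second isomorphism theorem) and the step of `X/M` is trivial, in
the second it reappears in `X/M` and the step of `M` is trivial. Hence the `S_j`-factors of
`(X_i)` split into those of `(X_i ⊓ M)` and those of `((X_i ⊔ M)/M)`. Stability of `M` makes
`(X_i ⊓ M)` and `(M_i)` mutually cofinal, and for two mutually cofinal filtrations of `M`, truncating
beyond the last `S_j`-factor and applying Jordan–Hölder to finite composition series shows that they
have the same number of `S_j`-factors.
-/

/-- The subquotient `A/B` of an ambient module. -/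
abbrev quotSub {R X : Type*} [Ring R] [AddCommGroup X] [Module R X]
    (A B : Submodule R X) : Type _ :=
  ↥A ⧸ B.comap A.subtype

/-- A module `Y` is *stable for descending filtrations* if for any two chains of submodules
`Y = C₀ ⊇ C₁ ⊇ ⋯` and `Y = D₀ ⊇ D₁ ⊇ ⋯` with `⋂ᵢ Cᵢ = 0 = ⋂ᵢ Dᵢ`, and for each index `i`,
there exists `m` with `D_m ⊆ C_i`. -/
def StableDesc (R Y : Type*) [Ring R] [AddCommGroup Y] [Module R Y] : Prop :=
  ∀ C D : ℕ → Submodule R Y, C 0 = ⊤ → D 0 = ⊤ →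
    (∀ i, C (i + 1) ≤ C i) → (∀ i, D (i + 1) ≤ D i) →
    (⨅ i, C i) = ⊥ → (⨅ i, D i) = ⊥ →
    ∀ i, ∃ m, D m ≤ C i

open Submodule

section Subquotient

variable {R : Type*} [Ring R] {X Y N : Type*} [AddCommGroup X] [Module R X]
  [AddCommGroup Y] [Module R Y] [AddCommGroup N] [Module R N]

lemma quotSub_subsingleton_iff {A B : Submodule R X} :
    Subsingleton (quotSub A B) ↔ A ≤ B :=
  Submodule.Quotient.subsingleton_iff.trans comap_subtype_eq_top

lemma not_nonempty_quotSub_linearEquiv [Nontrivial N] {A B : Submodule R X} (h : A ≤ B) :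
    ¬ Nonempty (quotSub A B ≃ₗ[R] N) := fun ⟨e⟩ =>
  have := quotSub_subsingleton_iff.mpr h
  not_nontrivial _ e.toEquiv.nontrivial

lemma wcovBy_of_quotSub {A B : Submodule R X} (hBA : B ≤ A)
    (h : Subsingleton (quotSub A B) ∨ IsSimpleModule R (quotSub A B)) : B ⩿ A := by
  rcases h with h | h
  · exact (le_antisymm hBA (quotSub_subsingleton_iff.mp h)).wcovBy
  · exact ((covBy_iff_quot_is_simple hBA).mpr h).wcovBy

lemma nonempty_quotSub_inf_linearEquiv (M : Submodule R X) {A B : Submodule R X}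
    (hBA : B ≤ A) (h : A ⊓ M ⊔ B = A) :
    Nonempty (quotSub (A ⊓ M) (B ⊓ M) ≃ₗ[R] quotSub A B) := by
  have e := LinearMap.quotientInfEquivSupQuotient (A ⊓ M) B
  rw [← comap_inf, inf_right_comm, inf_eq_right.mpr hBA, h] at e
  exact ⟨e⟩

lemma nonempty_quotSub_map_linearEquiv (f : X →ₗ[R] Y) {A B : Submodule R X} (hBA : B ≤ A)
    (h : A ⊓ LinearMap.ker f ≤ B) :
    Nonempty (quotSub (A.map f) (B.map f) ≃ₗ[R] quotSub A B) := by
  let g : A →ₗ[R] quotSub (A.map f) (B.map f) := mkQ _ ∘ₗ f.submoduleMap A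
  have hg : Function.Surjective g :=
    (mkQ_surjective _).comp (f.submoduleMap_surjective A)
  have hker : LinearMap.ker g = B.comap A.subtype := by
    ext a
    have hmod : (B ⊔ LinearMap.ker f) ⊓ A = B := by
      rw [sup_inf_assoc_of_le _ hBA, inf_comm, sup_eq_left.mpr h]
    have hfa : g a = 0 ↔ f a ∈ B.map f := Quotient.mk_eq_zero _
    rw [LinearMap.mem_ker, hfa, ← mem_comap, comap_map_eq, mem_comap]
    exact ⟨fun ha => hmod ▸ ⟨ha, a.2⟩, fun ha => mem_sup_left ha⟩
  exact ⟨((quotEquivOfEq _ _ hker).symm.trans (g.quotKerEquivOfSurjective hg)).symm⟩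

lemma WCovBy.quotSub_inf_ker_or_quotSub_map (g : X →ₗ[R] Y) {A B : Submodule R X} (h : B ⩿ A) :
    (Nonempty (quotSub (A ⊓ LinearMap.ker g) (B ⊓ LinearMap.ker g) ≃ₗ[R] quotSub A B) ∧
        A.map g ≤ B.map g) ∨
      (A ⊓ LinearMap.ker g ≤ B ⊓ LinearMap.ker g ∧
        Nonempty (quotSub (A.map g) (B.map g) ≃ₗ[R] quotSub A B)) := by
  rcases h.eq_or_eq le_sup_right (sup_le inf_le_left h.le) with hB | hA
  · have hle : A ⊓ LinearMap.ker g ≤ B := hB ▸ le_sup_left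
    exact .inr ⟨le_inf hle inf_le_right, nonempty_quotSub_map_linearEquiv g h.le hle⟩
  · refine .inl ⟨nonempty_quotSub_inf_linearEquiv _ h.le hA, ?_⟩
    rw [map_le_iff_le_comap, comap_map_eq, ← hA]
    exact (sup_le_sup_right inf_le_right B).trans_eq (sup_comm _ _)

end Subquotient

theorem WCovBy.inf_right {α : Type*} [Lattice α] [IsModularLattice α] {a b : α} (h : a ⩿ b)
    (c : α) : a ⊓ c ⩿ b ⊓ c := by
  rcases h.covBy_or_eq with hab | rfl
  · rcases h.eq_or_eq (le_sup_left : a ≤ a ⊔ b ⊓ c) (sup_le h.le inf_le_left) with hsup | hsup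
    · have hle : b ⊓ c ≤ a ⊓ c := le_inf (hsup ▸ le_sup_right) inf_le_right
      exact (le_antisymm (inf_le_inf_right c h.le) hle).wcovBy
    · have hcov := inf_covBy_of_covBy_sup_left (a := a) (b := b ⊓ c) (by rwa [hsup])
      rw [← inf_assoc, inf_eq_left.mpr h.le] at hcov
      exact hcov.wcovBy
  · exact WCovBy.refl _

lemma Set.ncard_inter_Iio_add_one (s : Set ℕ) (n : ℕ) [Decidable (n ∈ s)] :
    (s ∩ Iio (n + 1)).ncard = (s ∩ Iio n).ncard + if n ∈ s then 1 else 0 := by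
  rw [← Order.succ_eq_add_one, Order.Iio_succ_eq_insert]
  split_ifs with hn
  · rw [inter_insert_of_mem hn, ncard_insert_of_notMem (fun h => (lt_irrefl n) h.2)
      ((finite_Iio n).inter_of_right s)]
  · rw [inter_insert_of_notMem hn, add_zero]

namespace CompositionSeries

variable {R : Type*} [Ring R] {X : Type*} [AddCommGroup X] [Module R X]
  (N : Type*) [AddCommGroup N] [Module R N]

open scoped Classical in
noncomputable def factorCount (s : CompositionSeries (Submodule R X)) : ℕ :=
  (Finset.univ.filter fun i : Fin s.length =>
    Nonempty (quotSub (s i.succ) (s i.castSucc) ≃ₗ[R] N)).card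

lemma factorCount_eq_of_equivalent {s t : CompositionSeries (Submodule R X)} (h : s.Equivalent t) :
    factorCount N s = factorCount N t := by
  obtain ⟨e, he⟩ := h
  refine Finset.card_equiv e fun i => ?_
  simp only [Finset.mem_filter, Finset.mem_univ, true_and]
  exact Nonempty.congr ((he i).linearEquiv.symm.trans ·) ((he i).linearEquiv.trans ·)

open scoped Classical in
lemma factorCount_snoc (s : CompositionSeries (Submodule R X)) (x : Submodule R X)
    (h : s.last ⋖ x) :
    factorCount N (s.snoc x h) =
      factorCount N s + if Nonempty (quotSub x s.last ≃ₗ[R] N) then 1 else 0 := by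
  simp only [factorCount, Finset.card_filter]
  change (∑ i : Fin (s.length + 1), if Nonempty (quotSub ((s.snoc x h) i.succ)
    ((s.snoc x h) i.castSucc) ≃ₗ[R] N) then 1 else 0) = _
  rw [Fin.sum_univ_castSucc]
  congr 1
  · refine Finset.sum_congr rfl fun i _ => ?_
    rw [Fin.succ_castSucc]
    erw [RelSeries.snoc_castSucc, RelSeries.snoc_castSucc]
  · erw [Fin.succ_last, RelSeries.last_snoc', RelSeries.snoc_castSucc]
    rfl

lemma factorCount_singleton (x : Submodule R X) :
    factorCount N (RelSeries.singleton _ x : CompositionSeries (Submodule R X)) = 0 :=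
  Finset.card_eq_zero.mpr (Finset.eq_empty_of_forall_notMem fun i => i.elim0)

end CompositionSeries

section FactorIndices

variable {R : Type*} [Ring R] {X Y : Type*} [AddCommGroup X] [Module R X]
  [AddCommGroup Y] [Module R Y] (N : Type*) [AddCommGroup N] [Module R N]

def factorIndices (f : ℕ → Submodule R X) : Set ℕ :=
  {i | Nonempty (quotSub (f i) (f (i + 1)) ≃ₗ[R] N)}

variable [Nontrivial N] {f : ℕ → Submodule R X}

lemma factorIndices_eq_union_inf_ker_map (g : X →ₗ[R] Y) (hf : ∀ i, f (i + 1) ⩿ f i) :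
    factorIndices N f =
      factorIndices N (fun i => f i ⊓ LinearMap.ker g) ∪ factorIndices N (fun i => (f i).map g) := by
  ext i
  rcases (hf i).quotSub_inf_ker_or_quotSub_map g with ⟨⟨e⟩, hmap⟩ | ⟨hker, ⟨e⟩⟩
  · simp only [factorIndices, Set.mem_union, Set.mem_ofPred_eq,
      iff_false_intro (not_nonempty_quotSub_linearEquiv hmap), or_false]
    exact Nonempty.congr (e.trans ·) (e.symm.trans ·)
  · simp only [factorIndices, Set.mem_union, Set.mem_ofPred_eq,
      iff_false_intro (not_nonempty_quotSub_linearEquiv hker), false_or]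
    exact Nonempty.congr (e.trans ·) (e.symm.trans ·)

lemma disjoint_factorIndices_inf_ker_map (g : X →ₗ[R] Y) (hf : ∀ i, f (i + 1) ⩿ f i) :
    Disjoint (factorIndices N (fun i => f i ⊓ LinearMap.ker g))
      (factorIndices N (fun i => (f i).map g)) := by
  refine Set.disjoint_left.mpr fun i hker hmap => ?_
  rcases (hf i).quotSub_inf_ker_or_quotSub_map g with ⟨-, hle⟩ | ⟨hle, -⟩
  · exact not_nonempty_quotSub_linearEquiv hle hmap
  · exact not_nonempty_quotSub_linearEquiv hle hker

open CompositionSeries in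
theorem exists_compositionSeries_extend (hf : ∀ i, f (i + 1) ⩿ f i) (n : ℕ)
    (s : CompositionSeries (Submodule R X)) (hs : s.last = f n) :
    ∃ t : CompositionSeries (Submodule R X), t.head = s.head ∧ t.last = f 0 ∧
      factorCount N t = factorCount N s + (factorIndices N f ∩ Set.Iio n).ncard := by
  classical
  induction n generalizing s with
  | zero => exact ⟨s, rfl, hs, by simp⟩
  | succ n ih =>
    rw [Set.ncard_inter_Iio_add_one]
    rcases (hf n).covBy_or_eq with hcov | heq
    · obtain ⟨t, ht, hl, hc⟩ := ih (s.snoc (f n) (hs ▸ hcov)) (RelSeries.last_snoc ..)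
      refine ⟨t, ht.trans (RelSeries.head_snoc ..), hl, ?_⟩
      rw [hc, factorCount_snoc, hs, add_assoc, add_comm (ite _ _ _)]
      rfl
    · have hn : n ∉ factorIndices N f := not_nonempty_quotSub_linearEquiv heq.ge
      obtain ⟨t, ht, hl, hc⟩ := ih s (hs.trans heq)
      exact ⟨t, ht, hl, by rw [hc, if_neg hn, add_zero]⟩

open CompositionSeries in
theorem ncard_factorIndices_le_of_forall_exists_le {C D : ℕ → Submodule R X}
    (hC : ∀ i, C (i + 1) ⩿ C i) (hD : ∀ i, D (i + 1) ⩿ D i) (h0 : C 0 = D 0)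
    (hCfin : (factorIndices N C).Finite) (hDfin : (factorIndices N D).Finite)
    (hCD : ∀ i, ∃ k, C k ≤ D i) :
    (factorIndices N D).ncard ≤ (factorIndices N C).ncard := by
  obtain ⟨n, hn⟩ := hDfin.bddAbove
  obtain ⟨k₀, hk₀⟩ := hCD (n + 1)
  obtain ⟨k₁, hk₁⟩ := hCfin.bddAbove
  set k := max k₀ (k₁ + 1)
  have hCk : C k ≤ D (n + 1) :=
    (antitone_nat_of_succ_le fun i => (hC i).le) (le_max_left _ _) |>.trans hk₀
  have hD0 : D (n + 1) ≤ C 0 := h0 ▸ antitone_nat_of_succ_le (fun i => (hD i).le) (Nat.zero_le _)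
  -- `t₂` climbs from `C k` to `D (n + 1)` along `C i ⊓ D (n + 1)`, then along `D` to `D 0`;
  -- Jordan–Hölder compares it with the series `t₃` climbing along `C`.
  obtain ⟨t₁, ht₁, hl₁, -⟩ := exists_compositionSeries_extend N (f := fun i => C i ⊓ D (n + 1))
    (fun i => (hC i).inf_right _) k (RelSeries.singleton _ (C k)) (inf_eq_left.mpr hCk).symm
  obtain ⟨t₂, ht₂, hl₂, hc₂⟩ := exists_compositionSeries_extend N hD (n + 1) t₁
    (hl₁.trans (inf_eq_right.mpr hD0))
  obtain ⟨t₃, ht₃, hl₃, hc₃⟩ := exists_compositionSeries_extend N hC k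
    (RelSeries.singleton _ (C k)) rfl
  have hJH := factorCount_eq_of_equivalent N
    (jordan_holder t₂ t₃ (by rw [ht₂, ht₁, ht₃]) (by rw [hl₂, hl₃, h0]))
  have hDtrunc : factorIndices N D ∩ Set.Iio (n + 1) = factorIndices N D :=
    Set.inter_eq_left.mpr fun i hi => Nat.lt_succ_of_le (hn hi)
  have hCtrunc : factorIndices N C ∩ Set.Iio k = factorIndices N C :=
    Set.inter_eq_left.mpr fun i hi => (Nat.lt_succ_of_le (hk₁ hi)).trans_le (le_max_right _ _)
  rw [hc₂, hc₃, hDtrunc, hCtrunc, factorCount_singleton, zero_add] at hJH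
  omega

theorem ncard_factorIndices_eq_of_forall_exists_le {C D : ℕ → Submodule R X}
    (hC : ∀ i, C (i + 1) ⩿ C i) (hD : ∀ i, D (i + 1) ⩿ D i) (h0 : C 0 = D 0)
    (hCfin : (factorIndices N C).Finite) (hDfin : (factorIndices N D).Finite)
    (hCD : ∀ i, ∃ k, C k ≤ D i) (hDC : ∀ i, ∃ k, D k ≤ C i) :
    (factorIndices N C).ncard = (factorIndices N D).ncard :=
  le_antisymm (ncard_factorIndices_le_of_forall_exists_le N hD hC h0.symm hDfin hCfin hDC)
    (ncard_factorIndices_le_of_forall_exists_le N hC hD h0 hCfin hDfin hCD)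

end FactorIndices

section StableDesc

variable {R : Type*} [Ring R] {X Y Z : Type*} [AddCommGroup X] [Module R X]
  [AddCommGroup Y] [Module R Y] [AddCommGroup Z] [Module R Z]

theorem StableDesc.of_linearEquiv (e : Y ≃ₗ[R] Z) (h : StableDesc R Y) : StableDesc R Z := by
  intro C D hC0 hD0 hC hD hCinf hDinf i
  let φ := (orderIsoMapComap e).symm
  obtain ⟨m, hm⟩ := h (φ ∘ C) (φ ∘ D) (by simp [hC0]) (by simp [hD0])
    (fun i => φ.monotone (hC i)) (fun i => φ.monotone (hD i))
    (by simp [← φ.map_iInf, hCinf]) (by simp [← φ.map_iInf, hDinf]) i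
  exact ⟨m, φ.le_iff_le.mp hm⟩

theorem StableDesc.exists_le {M : Submodule R X} (h : StableDesc R M) {C D : ℕ → Submodule R X}
    (hC0 : C 0 = M) (hD0 : D 0 = M) (hC : ∀ i, C (i + 1) ≤ C i) (hD : ∀ i, D (i + 1) ≤ D i)
    (hCinf : ⨅ i, C i = ⊥) (hDinf : ⨅ i, D i = ⊥) (i : ℕ) : ∃ m, D m ≤ C i := by
  have hbot : (⊥ : Submodule R X).comap M.subtype = ⊥ := by simp
  obtain ⟨m, hm⟩ := h (fun i => (C i).comap M.subtype) (fun i => (D i).comap M.subtype)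
    (by simp [hC0]) (by simp [hD0]) (fun i => comap_mono (hC i)) (fun i => comap_mono (hD i))
    (by rw [← comap_iInf, hCinf, hbot]) (by rw [← comap_iInf, hDinf, hbot]) i
  have hDm : D m ≤ M := hD0 ▸ antitone_nat_of_succ_le hD (Nat.zero_le m)
  exact ⟨m, (le_inf hDm le_rfl).trans ((comap_subtype_le_iff.mp hm).trans inf_le_right)⟩

end StableDesc

theorem statement18_general {R : Type*} [Ring R] {X : Type*} [AddCommGroup X] [Module R X]
    {J : Type*} (S : J → Type*) [∀ j, AddCommGroup (S j)] [∀ j, Module R (S j)]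
    (hsimple : ∀ j, IsSimpleModule R (S j))
    (hstable : ∀ A B : Submodule R X, B ≤ A → StableDesc R (quotSub A B))
    (M : Submodule R X)
    (cX : ℕ → Submodule R X)
    (hX0 : cX 0 = ⊤) (hXdesc : ∀ i, cX (i + 1) ≤ cX i) (hXinf : (⨅ i, cX i) = ⊥)
    (hXq : ∀ i, Subsingleton (quotSub (cX i) (cX (i + 1))) ∨
      ∃ j, Nonempty (quotSub (cX i) (cX (i + 1)) ≃ₗ[R] S j))
    (hXfin : ∀ j, {i | Nonempty (quotSub (cX i) (cX (i + 1)) ≃ₗ[R] S j)}.Finite)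
    (cM : ℕ → Submodule R X)
    (hM0 : cM 0 = M) (hMdesc : ∀ i, cM (i + 1) ≤ cM i) (hMinf : (⨅ i, cM i) = ⊥)
    (hMq : ∀ i, Subsingleton (quotSub (cM i) (cM (i + 1))) ∨
      ∃ j, Nonempty (quotSub (cM i) (cM (i + 1)) ≃ₗ[R] S j))
    (hMfin : ∀ j, {i | Nonempty (quotSub (cM i) (cM (i + 1)) ≃ₗ[R] S j)}.Finite) :
    ∀ j, {i | Nonempty (quotSub (cX i) (cX (i + 1)) ≃ₗ[R] S j)}.ncard
      = {i | Nonempty (quotSub (cM i) (cM (i + 1)) ≃ₗ[R] S j)}.ncard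
        + {i | Nonempty
            (quotSub (Submodule.map M.mkQ (cX i)) (Submodule.map M.mkQ (cX (i + 1)))
              ≃ₗ[R] S j)}.ncard := by
  have wcov {A B : Submodule R X} (hBA : B ≤ A)
      (h : Subsingleton (quotSub A B) ∨ ∃ j, Nonempty (quotSub A B ≃ₗ[R] S j)) : B ⩿ A :=
    wcovBy_of_quotSub hBA (h.imp_right fun ⟨j, ⟨e⟩⟩ => have := hsimple j; .congr e)
  have hXw (i : ℕ) : cX (i + 1) ⩿ cX i := wcov (hXdesc i) (hXq i)
  have hMw (i : ℕ) : cM (i + 1) ⩿ cM i := wcov (hMdesc i) (hMq i)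
  have hCw (i : ℕ) : cX (i + 1) ⊓ M ⩿ cX i ⊓ M := (hXw i).inf_right M
  have hC0 : cX 0 ⊓ M = M := by rw [hX0, top_inf_eq]
  have hCinf : ⨅ i, cX i ⊓ M = ⊥ := eq_bot_iff.mpr (hXinf ▸ iInf_mono fun i => inf_le_left)
  have hstM : StableDesc R M := (hstable M ⊥ bot_le).of_linearEquiv (quotEquivOfEqBot _ (by simp))
  intro j
  have := IsSimpleModule.nontrivial R (S j)
  have hunion := factorIndices_eq_union_inf_ker_map (S j) M.mkQ hXw
  have hdisj := disjoint_factorIndices_inf_ker_map (S j) M.mkQ hXw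
  rw [ker_mkQ] at hunion hdisj
  have hCfin := (hXfin j).subset (hunion ▸ Set.subset_union_left)
  have hQfin := (hXfin j).subset (hunion ▸ Set.subset_union_right)
  change (factorIndices (S j) cX).ncard = (factorIndices (S j) cM).ncard +
    (factorIndices (S j) fun i => (cX i).map M.mkQ).ncard
  rw [hunion, Set.ncard_union_eq hdisj hCfin hQfin,
    ncard_factorIndices_eq_of_forall_exists_le (S j) hCw hMw (hC0.trans hM0.symm) hCfin (hMfin j)
      (hstM.exists_le hM0 hC0 (fun i => (hMw i).le) (fun i => (hCw i).le) hMinf hCinf)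
      (hstM.exists_le hC0 hM0 (fun i => (hCw i).le) (fun i => (hMw i).le) hCinf hMinf)]

/-- Let `M ⊆ X` with every subquotient of `X` stable for descending
filtrations.  Given descending ℤ-composition series of `X` and of `M` (with factors among a
family `(S_j)` of pairwise non-isomorphic simple modules), such that the induced chain
`X/M ⊇ (X₁ ⊔ M)/M ⊇ ⋯` is a descending ℤ-composition series of `X/M`, the multiplicity of
each `S_j` in the series of `X` equals its multiplicity in the series of `M` plus its
multiplicity in the induced series of `X/M`. -/
theorem statement18 {R : Type*} [Ring R] {X : Type*} [AddCommGroup X] [Module R X]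
    {J : Type*} (S : J → Type*) [∀ j, AddCommGroup (S j)] [∀ j, Module R (S j)]
    (hsimple : ∀ j, IsSimpleModule R (S j))
    (hpair : ∀ j j', j ≠ j' → IsEmpty (S j ≃ₗ[R] S j'))
    (hstable : ∀ A B : Submodule R X, B ≤ A → StableDesc R (quotSub A B))
    (M : Submodule R X)
    (cX : ℕ → Submodule R X)
    (hX0 : cX 0 = ⊤) (hXdesc : ∀ i, cX (i + 1) ≤ cX i) (hXinf : (⨅ i, cX i) = ⊥)
    (hXq : ∀ i, Subsingleton (quotSub (cX i) (cX (i + 1))) ∨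
      ∃ j, Nonempty (quotSub (cX i) (cX (i + 1)) ≃ₗ[R] S j))
    (hXfin : ∀ j, {i | Nonempty (quotSub (cX i) (cX (i + 1)) ≃ₗ[R] S j)}.Finite)
    (cM : ℕ → Submodule R X)
    (hM0 : cM 0 = M) (hMdesc : ∀ i, cM (i + 1) ≤ cM i) (hMinf : (⨅ i, cM i) = ⊥)
    (hMq : ∀ i, Subsingleton (quotSub (cM i) (cM (i + 1))) ∨
      ∃ j, Nonempty (quotSub (cM i) (cM (i + 1)) ≃ₗ[R] S j))
    (hMfin : ∀ j, {i | Nonempty (quotSub (cM i) (cM (i + 1)) ≃ₗ[R] S j)}.Finite)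
    (hQinf : (⨅ i, Submodule.map M.mkQ (cX i)) = ⊥)
    (hQq : ∀ i, Subsingleton
        (quotSub (Submodule.map M.mkQ (cX i)) (Submodule.map M.mkQ (cX (i + 1)))) ∨
      ∃ j, Nonempty
        (quotSub (Submodule.map M.mkQ (cX i)) (Submodule.map M.mkQ (cX (i + 1))) ≃ₗ[R] S j))
    (hQfin : ∀ j, {i | Nonempty
        (quotSub (Submodule.map M.mkQ (cX i)) (Submodule.map M.mkQ (cX (i + 1)))
          ≃ₗ[R] S j)}.Finite) :
    ∀ j, {i | Nonempty (quotSub (cX i) (cX (i + 1)) ≃ₗ[R] S j)}.ncard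
      = {i | Nonempty (quotSub (cM i) (cM (i + 1)) ≃ₗ[R] S j)}.ncard
        + {i | Nonempty
            (quotSub (Submodule.map M.mkQ (cX i)) (Submodule.map M.mkQ (cX (i + 1)))
              ≃ₗ[R] S j)}.ncard :=
  statement18_general S hsimple hstable M cX hX0 hXdesc hXinf hXq hXfin cM hM0 hMdesc hMinf hMq
    hMfin
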